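/- arXiv:1511.01207 — 5 statements merged into one kernel-verified Lean document; each statement's English description precedes it below -/
import Mathlib

section
/- Let ℳ = 𝒮 × ℋ be a bounded discrete market (for each H ∈ ℋ there exists n(H) with N_H(S) ≤ n(H) for all S ∈ 𝒮), let Z : 𝒮 → ℝ, fix S ∈ 𝒮 and k ≥ 0. If every node (S̃, j) with S̃ ∈ 𝒮_(S,k) and j ≥ k is 0-neutral, then V̲_k(S, Z, ℳ) ≤ V̄_k(S, Z, ℳ). -/
open scoped BigOperators

structure Portfolio where
  pos : ℕ → (ℕ → ℝ) → ℝ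
  N : (ℕ → ℝ) → ℕ

structure Market where
  s0 : ℝ
  T : Set (ℕ → ℝ)
  P : Set Portfolio
  start : ∀ S ∈ T, S 0 = s0
  nonanticipative : ∀ H ∈ P, ∀ i : ℕ, ∀ S ∈ T, ∀ S' ∈ T,
    (∀ k ≤ i, S k = S' k) → H.pos i S = H.pos i S'
  liquidate : ∀ H ∈ P, ∀ S ∈ T, ∀ k : ℕ, H.N S ≤ k → H.pos k S = 0
  zero_mem : (⟨fun _ _ => 0, fun _ => 0⟩ : Portfolio) ∈ P

def StoppingTime (T : Set (ℕ → ℝ)) (ν : (ℕ → ℝ) → ℕ) : Prop :=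
  ∀ S ∈ T, ∀ S' ∈ T, (∀ k ≤ ν S, S' k = S k) → ν S' = ν S

namespace Market

/-- The conditional trajectory set `𝒮_(S,k)`. -/
def cond (M : Market) (S : ℕ → ℝ) (k : ℕ) : Set (ℕ → ℝ) :=
  {S' | S' ∈ M.T ∧ ∀ i ≤ k, S' i = S i}

/-- The conditional upper minmax bound `V̄_k(S, Z, ℳ)`. -/
noncomputable def Vbar (M : Market) (k : ℕ) (S : ℕ → ℝ) (Z : (ℕ → ℝ) → ℝ) : EReal :=
  ⨅ H ∈ M.P, ⨆ S' ∈ M.cond S k,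
    ((Z S' - ∑ i ∈ Finset.Ico k (H.N S'), H.pos i S' * (S' (i + 1) - S' i) : ℝ) : EReal)

/-- The conditional lower minmax bound `V̲_k(S, Z, ℳ) = -V̄_k(S, -Z, ℳ)`. -/
noncomputable def Vlow (M : Market) (k : ℕ) (S : ℕ → ℝ) (Z : (ℕ → ℝ) → ℝ) : EReal :=
  - M.Vbar k S (fun S' => - Z S')

/-- The node `(S, j)` is 0-neutral. -/
def ZeroNeutralNode (M : Market) (S : ℕ → ℝ) (j : ℕ) : Prop :=
  0 ≤ (⨆ S' ∈ M.cond S j, ((S' (j + 1) - S j : ℝ) : EReal)) ∧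
    (⨅ S' ∈ M.cond S j, ((S' (j + 1) - S j : ℝ) : EReal)) ≤ 0

/-- The node `(S, j)` satisfies the up-down property. -/
def UpDownNode (M : Market) (S : ℕ → ℝ) (j : ℕ) : Prop :=
  0 < (⨆ S' ∈ M.cond S j, ((S' (j + 1) - S j : ℝ) : EReal)) ∧
    (⨅ S' ∈ M.cond S j, ((S' (j + 1) - S j : ℝ) : EReal)) < 0

/-- Positive arbitrage node. -/
def PosArbNode (M : Market) (S : ℕ → ℝ) (j : ℕ) : Prop :=
  0 < (⨆ S' ∈ M.cond S j, ((S' (j + 1) - S j : ℝ) : EReal)) ∧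
    (⨅ S' ∈ M.cond S j, ((S' (j + 1) - S j : ℝ) : EReal)) = 0

/-- Negative arbitrage node. -/
def NegArbNode (M : Market) (S : ℕ → ℝ) (j : ℕ) : Prop :=
  (⨆ S' ∈ M.cond S j, ((S' (j + 1) - S j : ℝ) : EReal)) = 0 ∧
    (⨅ S' ∈ M.cond S j, ((S' (j + 1) - S j : ℝ) : EReal)) < 0

def LocallyZeroNeutral (M : Market) : Prop :=
  ∀ S ∈ M.T, ∀ j : ℕ, M.ZeroNeutralNode S j

/-- `ℳ` is `n`-bounded. -/
def NBounded (M : Market) (n : ℕ) : Prop :=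
  ∀ H ∈ M.P, ∀ S ∈ M.T, H.N S ≤ n

/-- `M(S) = sup_{H ∈ ℋ} N_H(S)`. -/
noncomputable def Mx (M : Market) (S : ℕ → ℝ) : ℕ :=
  sSup ((fun H : Portfolio => H.N S) '' M.P)

/-- `I^k_S = {H_k(S) : H ∈ ℋ}`. -/
def Iset (M : Market) (k : ℕ) (S : ℕ → ℝ) : Set ℝ :=
  {u : ℝ | ∃ H ∈ M.P, H.pos k S = u}

/-- `U` is the family of dynamic bounds `Ū_i(·, Z, ℳ)` (EReal-valued version,
with the local infimum taken over portfolios). -/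
def IsDynU (M : Market) (Z : (ℕ → ℝ) → ℝ) (U : ℕ → (ℕ → ℝ) → EReal) : Prop :=
  ∀ S ∈ M.T,
    (∀ i : ℕ, M.Mx S < i → U i S = 0) ∧
    U (M.Mx S) S = (Z S : EReal) ∧
    ∀ i : ℕ, i < M.Mx S →
      U i S = ⨅ H ∈ M.P, ⨆ S' ∈ M.cond S i,
        (U (i + 1) S' - ((H.pos i S * (S' (i + 1) - S i) : ℝ) : EReal))

/-- `U` is the family of dynamic bounds `Ū_i(·, Z, ℳ)` (finite, real-valued version,
with the local infimum taken over `I^i_S`). -/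
def IsDynUR (M : Market) (Z : (ℕ → ℝ) → ℝ) (U : ℕ → (ℕ → ℝ) → ℝ) : Prop :=
  ∀ S ∈ M.T,
    (∀ i : ℕ, M.Mx S < i → U i S = 0) ∧
    U (M.Mx S) S = Z S ∧
    ∀ i : ℕ, i < M.Mx S →
      ((U i S : ℝ) : EReal) = ⨅ u ∈ M.Iset i S, ⨆ S' ∈ M.cond S i,
        ((U (i + 1) S' - u * (S' (i + 1) - S i) : ℝ) : EReal)

/-- `ℳ` is u-complete with respect to `Z` (relative to the dynamic bounds `U`). -/
def UComplete (M : Market) (Z : (ℕ → ℝ) → ℝ) (U : ℕ → (ℕ → ℝ) → EReal) : Prop :=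
  ∀ S ∈ M.T, ∀ k : ℕ, 1 ≤ k → k < M.Mx S →
    ∃ H ∈ M.P, U k S = ⨆ S' ∈ M.cond S k,
      (U (k + 1) S' - ((H.pos k S * (S' (k + 1) - S k) : ℝ) : EReal))

/-- The portfolio set of `ℳ` is FULL. -/
def IsFULL (M : Market) : Prop :=
  ∀ k : ℕ, ∀ Sstar ∈ M.T, ∀ j : ℕ, k ≤ j →
    ∀ f : (ℕ → ℝ) → ℝ,
      (∀ S ∈ M.cond Sstar k, ∃ H ∈ M.P, ∃ S' ∈ M.cond Sstar k, H.pos j S' = f S) →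
      (∀ S ∈ M.cond Sstar k, ∀ S' ∈ M.cond Sstar k, (∀ l ≤ j, S l = S' l) → f S = f S') →
      ∃ H ∈ M.P, ∀ S ∈ M.cond Sstar k, H.pos j S = f S

/-- `𝒮⁺_(S,i)`. -/
def Splus (M : Market) (S : ℕ → ℝ) (i : ℕ) : Set (ℕ → ℝ) :=
  {S' | S' ∈ M.cond S i ∧ S i < S' (i + 1)}

/-- `𝒮⁻_(S,i)`. -/
def Sminus (M : Market) (S : ℕ → ℝ) (i : ℕ) : Set (ℕ → ℝ) :=
  {S' | S' ∈ M.cond S i ∧ S' (i + 1) ≤ S i}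

/-- `𝒮⁺_(S,i)` with the strict inequality interchanged. -/
def SplusAlt (M : Market) (S : ℕ → ℝ) (i : ℕ) : Set (ℕ → ℝ) :=
  {S' | S' ∈ M.cond S i ∧ S i ≤ S' (i + 1)}

/-- `𝒮⁻_(S,i)` with the strict inequality interchanged. -/
def SminusAlt (M : Market) (S : ℕ → ℝ) (i : ℕ) : Set (ℕ → ℝ) :=
  {S' | S' ∈ M.cond S i ∧ S' (i + 1) < S i}

/-- `𝒮^=_(S,i)`. -/
def Seq (M : Market) (S : ℕ → ℝ) (i : ℕ) : Set (ℕ → ℝ) :=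
  {S' | S' ∈ M.cond S i ∧ S' (i + 1) = S i}

end Market

/-- The slope `u_(S⁺,S⁻)` of the chord joining the graph points of `Ū_{i+1}`. -/
noncomputable def chSlope (U : ℕ → (ℕ → ℝ) → ℝ) (i : ℕ) (Sp Sm : ℕ → ℝ) : ℝ :=
  (U (i + 1) Sp - U (i + 1) Sm) / (Sp (i + 1) - Sm (i + 1))

namespace Market

/-- The convex hull quantity `L_i(S, Z, ℳ)`. -/
noncomputable def Lval (M : Market) (U : ℕ → (ℕ → ℝ) → ℝ) (S : ℕ → ℝ) (i : ℕ) : EReal :=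
  ⨆ Sp ∈ M.Splus S i, ⨆ Sm ∈ M.Sminus S i,
    ((U (i + 1) Sp - chSlope U i Sp Sm * (Sp (i + 1) - S i) : ℝ) : EReal)

/-- The convex hull quantity `L_i(S, Z, ℳ)` with the roles of the strict and
non-strict inequalities interchanged. -/
noncomputable def LvalAlt (M : Market) (U : ℕ → (ℕ → ℝ) → ℝ) (S : ℕ → ℝ) (i : ℕ) : EReal :=
  ⨆ Sp ∈ M.SplusAlt S i, ⨆ Sm ∈ M.SminusAlt S i,
    ((U (i + 1) Sp - chSlope U i Sp Sm * (Sp (i + 1) - S i) : ℝ) : EReal)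

end Market

/-- The nested supremum appearing in the iterated expression of the global bound:
`nestedSup M H Z r k S` is the `r`-fold nested supremum starting at stage `k` from
the trajectory `S`. -/
noncomputable def nestedSup (M : Market) (H : Portfolio) (Z : (ℕ → ℝ) → ℝ) :
    ℕ → ℕ → (ℕ → ℝ) → EReal
  | 0, _, S => ((Z S : ℝ) : EReal)
  | r + 1, k, S => ⨆ S' ∈ M.cond S k,
      (((-(H.pos k S' * (S' (k + 1) - S' k)) : ℝ) : EReal) + nestedSup M H Z r (k + 1) S')

/-!
Fix portfolios `H` for `Z` and `G` for `-Z`. At a 0-neutral node the infimum of `ΔS` is `≤ 0` and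
its supremum `≥ 0`, so for any position `c` some successor makes `c · ΔS ≤ δ`. Choosing successors
this way for the combined position `H + G`, up to a common bound of the liquidation times, yields a
trajectory on which the joint gain of `H` and `G` is at most `ε`. There
`(Z - gain H) + (-Z - gain G) ≥ -ε`, hence `sup (Z - gain H) ≥ -sup (-Z - gain G)`.
-/

open Finset

theorem EReal.neg_biSup_le_biSup_of_forall_exists {α : Type*} {s : Set α} {f g : α → ℝ}
    (h : ∀ ε > 0, ∃ x ∈ s, -ε ≤ f x + g x) :
    -(⨆ x ∈ s, (g x : EReal)) ≤ ⨆ x ∈ s, (f x : EReal) := by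
  by_contra! hlt
  obtain ⟨b, hfb, hb⟩ := EReal.lt_iff_exists_real_btwn.1 hlt
  obtain ⟨a, hba, hag⟩ := EReal.lt_iff_exists_real_btwn.1 hb
  obtain ⟨x, hx, hfg⟩ := h (a - b) (by linarith [EReal.coe_lt_coe_iff.1 hba])
  have hf : f x < b := EReal.coe_lt_coe_iff.1 <|
    (le_iSup₂ (f := fun x (_ : x ∈ s) => (f x : EReal)) x hx).trans_lt hfb
  have hg : g x < -a := EReal.coe_lt_coe_iff.1 <|
    (le_iSup₂ (f := fun x (_ : x ∈ s) => (g x : EReal)) x hx).trans_lt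
      (EReal.lt_neg_of_lt_neg hag)
  linarith

theorem exists_mem_mul_le_of_biSup_nonneg_of_biInf_nonpos {α : Type*} {s : Set α} {f : α → ℝ}
    (hsup : 0 ≤ ⨆ x ∈ s, (f x : EReal)) (hinf : ⨅ x ∈ s, (f x : EReal) ≤ 0)
    (c : ℝ) {δ : ℝ} (hδ : 0 < δ) : ∃ x ∈ s, c * f x ≤ δ := by
  rcases lt_trichotomy c 0 with hc | rfl | hc
  · obtain ⟨x, hx, hlt⟩ : ∃ x ∈ s, ((δ / c : ℝ) : EReal) < f x := by
      simpa only [lt_iSup_iff, exists_prop] using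
        (EReal.coe_lt_coe_iff.2 (div_neg_of_pos_of_neg hδ hc)).trans_le hsup
    exact ⟨x, hx, ((div_lt_iff_of_neg' hc).1 (EReal.coe_lt_coe_iff.1 hlt)).le⟩
  · obtain ⟨x, hx⟩ : s.Nonempty := Set.nonempty_iff_ne_empty.2 fun hs => by simp [hs] at hsup
    exact ⟨x, hx, by simpa using hδ.le⟩
  · obtain ⟨x, hx, hlt⟩ : ∃ x ∈ s, (f x : EReal) < ((δ / c : ℝ) : EReal) := by
      simpa only [iInf_lt_iff, exists_prop] using
        hinf.trans_lt (EReal.coe_lt_coe_iff.2 (div_pos hδ hc))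
    exact ⟨x, hx, ((lt_div_iff₀' hc).1 (EReal.coe_lt_coe_iff.1 hlt)).le⟩

def tradingGain (F : ℕ → (ℕ → ℝ) → ℝ) (k n : ℕ) (S : ℕ → ℝ) : ℝ :=
  ∑ i ∈ Ico k n, F i S * (S (i + 1) - S i)

theorem tradingGain_add (F G : ℕ → (ℕ → ℝ) → ℝ) (k n : ℕ) (S : ℕ → ℝ) :
    tradingGain (F + G) k n S = tradingGain F k n S + tradingGain G k n S := by
  simp only [tradingGain, Pi.add_apply, add_mul, sum_add_distrib]

def NonAnticipative (T : Set (ℕ → ℝ)) (F : ℕ → (ℕ → ℝ) → ℝ) : Prop :=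
  ∀ i, ∀ S ∈ T, ∀ S' ∈ T, (∀ l ≤ i, S l = S' l) → F i S = F i S'

theorem NonAnticipative.add {T : Set (ℕ → ℝ)} {F G : ℕ → (ℕ → ℝ) → ℝ}
    (hF : NonAnticipative T F) (hG : NonAnticipative T G) : NonAnticipative T (F + G) :=
  fun i S hS S' hS' h => by simp only [Pi.add_apply, hF i S hS S' hS' h, hG i S hS S' hS' h]

namespace Market

variable (M : Market)

theorem mem_cond_self {S : ℕ → ℝ} (hS : S ∈ M.T) (k : ℕ) : S ∈ M.cond S k :=
  ⟨hS, fun _ _ => rfl⟩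

variable {M}

theorem cond_trans {S S' S'' : ℕ → ℝ} {k j : ℕ} (hkj : k ≤ j)
    (h₁ : S' ∈ M.cond S k) (h₂ : S'' ∈ M.cond S' j) : S'' ∈ M.cond S k :=
  ⟨h₂.1, fun i hi => (h₂.2 i (hi.trans hkj)).trans (h₁.2 i hi)⟩

theorem nonAnticipative_pos {H : Portfolio} (hH : H ∈ M.P) : NonAnticipative M.T H.pos :=
  M.nonanticipative H hH

theorem tradingGain_N_eq {H : Portfolio} (hH : H ∈ M.P) {S : ℕ → ℝ} (hS : S ∈ M.T) (k : ℕ)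
    {n : ℕ} (hn : H.N S ≤ n) : tradingGain H.pos k (H.N S) S = tradingGain H.pos k n S := by
  refine sum_subset (Ico_subset_Ico le_rfl hn) fun i hi hiN => ?_
  simp only [mem_Ico] at hi hiN
  rw [M.liquidate H hH S hS i (by omega), zero_mul]

theorem ZeroNeutralNode.exists_mem_cond_mul_le {S : ℕ → ℝ} {j : ℕ} (h : M.ZeroNeutralNode S j)
    (c : ℝ) {δ : ℝ} (hδ : 0 < δ) : ∃ S' ∈ M.cond S j, c * (S' (j + 1) - S j) ≤ δ :=
  exists_mem_mul_le_of_biSup_nonneg_of_biInf_nonpos h.1 h.2 c hδ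

theorem exists_mem_cond_tradingGain_le {F : ℕ → (ℕ → ℝ) → ℝ} (hF : NonAnticipative M.T F)
    {S : ℕ → ℝ} {k : ℕ} (h0 : ∀ S' ∈ M.cond S k, ∀ j : ℕ, k ≤ j → M.ZeroNeutralNode S' j)
    (m : ℕ) : ∀ j, k ≤ j → ∀ S' ∈ M.cond S k, ∀ ε > 0,
      ∃ S'' ∈ M.cond S' j, tradingGain F j (j + m) S'' ≤ ε := by
  induction m with
  | zero =>
    intro j _ S' hS' ε hε
    exact ⟨S', M.mem_cond_self hS'.1 j, by simpa [tradingGain] using hε.le⟩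
  | succ m ih =>
    intro j hkj S' hS' ε hε
    obtain ⟨S'', hS'', hstep⟩ :=
      (h0 S' hS' j hkj).exists_mem_cond_mul_le (F j S') (half_pos hε)
    obtain ⟨S₃, hS₃, htail⟩ :=
      ih (j + 1) (by omega) S'' (cond_trans hkj hS' hS'') (ε / 2) (half_pos hε)
    refine ⟨S₃, cond_trans j.le_succ hS'' hS₃, ?_⟩
    have hpos : F j S₃ = F j S' :=
      hF j S₃ hS₃.1 S' hS'.1 fun l hl => (hS₃.2 l (by omega)).trans (hS''.2 l hl)
    have hnext : S₃ (j + 1) = S'' (j + 1) := hS₃.2 (j + 1) le_rfl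
    have hcur : S₃ j = S' j := (hS₃.2 j j.le_succ).trans (hS''.2 j le_rfl)
    unfold tradingGain at htail ⊢
    rw [show j + (m + 1) = j + 1 + m by omega, sum_eq_sum_Ico_succ_bot (by omega), hpos, hnext,
      hcur]
    linarith

theorem neg_iSup_cond_le_iSup_cond {S : ℕ → ℝ} (hS : S ∈ M.T) {k : ℕ}
    (h0 : ∀ S' ∈ M.cond S k, ∀ j : ℕ, k ≤ j → M.ZeroNeutralNode S' j)
    {H G : Portfolio} (hH : H ∈ M.P) (hG : G ∈ M.P) {n : ℕ}
    (hHn : ∀ S' ∈ M.T, H.N S' ≤ n) (hGn : ∀ S' ∈ M.T, G.N S' ≤ n) (Z : (ℕ → ℝ) → ℝ) :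
    -(⨆ S' ∈ M.cond S k, ((-Z S' - tradingGain G.pos k (G.N S') S' : ℝ) : EReal)) ≤
      ⨆ S' ∈ M.cond S k, ((Z S' - tradingGain H.pos k (H.N S') S' : ℝ) : EReal) := by
  refine EReal.neg_biSup_le_biSup_of_forall_exists fun ε hε => ?_
  obtain ⟨S', hS', hgain⟩ :=
    exists_mem_cond_tradingGain_le ((nonAnticipative_pos hH).add (nonAnticipative_pos hG)) h0
      n k le_rfl S (M.mem_cond_self hS k) ε hε
  refine ⟨S', hS', ?_⟩
  rw [tradingGain_N_eq hH hS'.1 k ((hHn S' hS'.1).trans (n.le_add_left k)),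
    tradingGain_N_eq hG hS'.1 k ((hGn S' hS'.1).trans (n.le_add_left k))]
  rw [tradingGain_add] at hgain
  linarith

end Market

/-- Price interval theorem: in a bounded discrete market, if every node
`(S̃, j)` with `S̃ ∈ 𝒮_(S,k)` and `j ≥ k` is 0-neutral, then
`V̲_k(S, Z, ℳ) ≤ V̄_k(S, Z, ℳ)`. -/
theorem price_interval (M : Market)
    (hbdd : ∀ H ∈ M.P, ∃ n : ℕ, ∀ S ∈ M.T, H.N S ≤ n)
    (Z : (ℕ → ℝ) → ℝ) (S : ℕ → ℝ) (hS : S ∈ M.T) (k : ℕ)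
    (h0 : ∀ S' ∈ M.cond S k, ∀ j : ℕ, k ≤ j → M.ZeroNeutralNode S' j) :
    M.Vlow k S Z ≤ M.Vbar k S Z := by
  refine le_iInf₂ fun H hH => EReal.neg_le.1 (le_iInf₂ fun G hG => EReal.neg_le.1 ?_)
  obtain ⟨nH, hnH⟩ := hbdd H hH
  obtain ⟨nG, hnG⟩ := hbdd G hG
  exact M.neg_iSup_cond_le_iSup_cond hS h0 hH hG
    (fun S' hS' => (hnH S' hS').trans (le_max_left nH nG))
    (fun S' hS' => (hnG S' hS').trans (le_max_right nH nG)) Z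
end

section
/- Let ℳ = 𝒮 × ℋ be an n-bounded discrete market and Z ≥ 0 a function defined on 𝒮. If 𝒮 is locally 0-neutral, then for every S ∈ 𝒮 and every 0 ≤ i ≤ n, the dynamic bound satisfies Ū_i(S, Z, ℳ) ≥ 0. -/
open scoped BigOperators

/-!
Backward induction on `i`. At and beyond the horizon the bound is `Z ≥ 0` or `0`. Before it,
whatever position `u` the hedger holds, 0-neutrality of the node yields continuations on which
the trading gain `u * Δ` is below any `ε > 0`; since the next bound is nonnegative there, the
supremum in the recursion is at least `-ε` for every `ε > 0`, hence nonnegative.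
-/

theorem exists_mul_lt_of_iInf_le_zero_le_iSup {α : Type*} {s : Set α} {f : α → ℝ}
    (hsup : 0 ≤ ⨆ x ∈ s, (f x : EReal)) (hinf : ⨅ x ∈ s, (f x : EReal) ≤ 0)
    (u : ℝ) {ε : ℝ} (hε : 0 < ε) : ∃ x ∈ s, u * f x < ε := by
  rcases lt_trichotomy u 0 with hu | rfl | hu
  · have hbound : ((ε / u : ℝ) : EReal) < ⨆ x ∈ s, (f x : EReal) :=
      lt_of_lt_of_le (by exact_mod_cast div_neg_of_pos_of_neg hε hu) hsup
    simp only [lt_iSup_iff, EReal.coe_lt_coe_iff] at hbound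
    obtain ⟨x, hx, hlt⟩ := hbound
    exact ⟨x, hx, by rw [mul_comm]; exact (div_lt_iff_of_neg hu).1 hlt⟩
  · have hbound : ((-1 : ℝ) : EReal) < ⨆ x ∈ s, (f x : EReal) :=
      lt_of_lt_of_le (by norm_num) hsup
    simp only [lt_iSup_iff] at hbound
    obtain ⟨x, hx, -⟩ := hbound
    exact ⟨x, hx, by simpa using hε⟩
  · have hbound : ⨅ x ∈ s, (f x : EReal) < ((ε / u : ℝ) : EReal) :=
      lt_of_le_of_lt hinf (by exact_mod_cast div_pos hε hu)
    simp only [iInf_lt_iff, EReal.coe_lt_coe_iff] at hbound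
    obtain ⟨x, hx, hlt⟩ := hbound
    exact ⟨x, hx, by rw [mul_comm]; exact (lt_div_iff₀ hu).1 hlt⟩

namespace Market

variable {M : Market} {Z : (ℕ → ℝ) → ℝ} {U : ℕ → (ℕ → ℝ) → EReal}

theorem Mx_le_of_nBounded {n : ℕ} (hn : M.NBounded n) {S : ℕ → ℝ} (hS : S ∈ M.T) :
    M.Mx S ≤ n :=
  csSup_le ⟨0, _, M.zero_mem, rfl⟩ (by rintro _ ⟨H, hH, rfl⟩; exact hn H hH S hS)

theorem ZeroNeutralNode.nonneg_iSup_sub_gain {S : ℕ → ℝ} {i : ℕ}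
    (hnode : M.ZeroNeutralNode S i) {V : (ℕ → ℝ) → EReal}
    (hV : ∀ S' ∈ M.cond S i, 0 ≤ V S') (u : ℝ) :
    0 ≤ ⨆ S' ∈ M.cond S i, (V S' - ((u * (S' (i + 1) - S i) : ℝ) : EReal)) := by
  refine EReal.ge_of_forall_gt_iff_ge.1 fun z hz => ?_
  obtain ⟨S', hS', hgain⟩ := exists_mul_lt_of_iInf_le_zero_le_iSup hnode.1 hnode.2 u
    (neg_pos.2 (EReal.coe_lt_coe_iff.1 hz))
  calc (z : EReal) = 0 - ((-z : ℝ) : EReal) := by rw [zero_sub, EReal.coe_neg, neg_neg]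
    _ ≤ V S' - ((u * (S' (i + 1) - S i) : ℝ) : EReal) :=
        EReal.sub_le_sub (hV S' hS') (EReal.coe_le_coe_iff.2 hgain.le)
    _ ≤ _ := le_iSup₂_of_le S' hS' le_rfl

theorem IsDynU.nonneg_of_succ (hU : M.IsDynU Z U) (hZ : ∀ S ∈ M.T, 0 ≤ Z S)
    (hloc : M.LocallyZeroNeutral) {i : ℕ} (hsucc : ∀ S ∈ M.T, 0 ≤ U (i + 1) S) :
    ∀ S ∈ M.T, 0 ≤ U i S := by
  intro S hS
  obtain ⟨hbeyond, hhorizon, hrec⟩ := hU S hS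
  rcases lt_trichotomy i (M.Mx S) with hlt | rfl | hgt
  · rw [hrec i hlt]
    exact le_iInf₂ fun H _ =>
      (hloc S hS i).nonneg_iSup_sub_gain (fun S' hS' => hsucc S' hS'.1) (H.pos i S)
  · rw [hhorizon]
    exact EReal.coe_nonneg.2 (hZ S hS)
  · rw [hbeyond i hgt]

theorem IsDynU.nonneg {n : ℕ} (hU : M.IsDynU Z U) (hn : M.NBounded n)
    (hZ : ∀ S ∈ M.T, 0 ≤ Z S) (hloc : M.LocallyZeroNeutral) (i : ℕ) :
    ∀ S ∈ M.T, 0 ≤ U i S := by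
  have descend : ∀ k i, (∀ S ∈ M.T, 0 ≤ U (i + k) S) → ∀ S ∈ M.T, 0 ≤ U i S := by
    intro k
    induction k with
    | zero => exact fun i h => h
    | succ k ih =>
      exact fun i h => hU.nonneg_of_succ hZ hloc (ih (i + 1) (by rwa [Nat.add_right_comm]))
  refine descend (n + 1) i fun S hS => ?_
  rw [(hU S hS).1 (i + (n + 1)) (by have := Mx_le_of_nBounded hn hS; omega)]

end Market

theorem dynamic_bounds_nonneg_general (n : ℕ) (M : Market) (hn : M.NBounded n)
    (Z : (ℕ → ℝ) → ℝ) (hZ : ∀ S ∈ M.T, 0 ≤ Z S)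
    (hloc : M.LocallyZeroNeutral)
    (U : ℕ → (ℕ → ℝ) → EReal) (hU : M.IsDynU Z U)
    (S : ℕ → ℝ) (hS : S ∈ M.T) (i : ℕ) :
    0 ≤ U i S :=
  hU.nonneg hn hZ hloc i S hS

/-- in an `n`-bounded market with a locally 0-neutral trajectory set and a
nonnegative payoff `Z`, all dynamic bounds are nonnegative: `Ū_i(S, Z, ℳ) ≥ 0`. -/
theorem dynamic_bounds_nonneg (n : ℕ) (M : Market) (hn : M.NBounded n)
    (Z : (ℕ → ℝ) → ℝ) (hZ : ∀ S ∈ M.T, 0 ≤ Z S)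
    (hloc : M.LocallyZeroNeutral)
    (U : ℕ → (ℕ → ℝ) → EReal) (hU : M.IsDynU Z U)
    (S : ℕ → ℝ) (hS : S ∈ M.T) (i : ℕ) (hi : i ≤ n) :
    0 ≤ U i S :=
  dynamic_bounds_nonneg_general n M hn Z hZ hloc U hU S hS i
end

section
/- Let ℳ = 𝒮 × ℋ be an n-bounded discrete market such that N_H is a stopping time for every H ∈ ℋ, and assume that for every S ∈ 𝒮 and 0 ≤ k < M(S), either I^k_S = {H_k(S) : H ∈ ℋ} is a compact subset of ℝ, or 𝒮 satisfies the up-down property at (S, k) and I^k_S = ℝ; assume also that the dynamic bounds Ū_{k+1}(·, Z, ℳ) are finite on the relevant conditional sets. Then there exists a non-anticipative portfolio H* with N_{H*}(S) = M(S) such that, setting ℋ* = ℋ ∪ {H*}, the market ℳ* = 𝒮 × ℋ* is u-complete with respect to Z; moreover Ū_i(S, Z, ℳ*) = Ū_i(S, Z, ℳ) for all S ∈ 𝒮 and 0 ≤ i ≤ n. -/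
open scoped BigOperators

/-!
A minimiser `u*` of the lower semicontinuous one-step cost
`u ↦ sup_{S'} (Ū_{k+1}(S') - u Δ_k S')` over `I^k_S` exists at every node: on a compact `I^k_S`
by lower semicontinuity, and on `I^k_S = ℝ` because the up-down property bounds the cost below by
two affine functions of opposite slopes, so its sublevel sets are compact. Those affine bounds have
real intercepts because `Ū_{k+1} > -∞`, which follows by the same backward induction. Since
`Ū_k(S)` is the infimum of the cost over `I^k_S`, the portfolio holding `u*` at every node attains
it, and adding a portfolio that never beats `Ū_k` leaves the backward recursion, hence all dynamic
bounds, unchanged.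
-/

open Set

theorem Nat.forall_of_downward_induction {P : ℕ → Prop} {n : ℕ} (hlarge : ∀ k, n < k → P k)
    (hstep : ∀ k ≤ n, P (k + 1) → P k) (k : ℕ) : P k := by
  rcases lt_or_ge n k with hk | hk
  · exact hlarge k hk
  · exact Nat.decreasingInduction (motive := fun m _ => P m)
      (fun m hm h => hstep m (Nat.lt_succ_iff.1 hm) h) (hlarge (n + 1) n.lt_succ_self)
      (Nat.le_succ_of_le hk)

theorem EReal.exists_coe_sub_le_sub {a : EReal} (ha : ⊥ < a) :
    ∃ c : ℝ, ∀ r : ℝ, ((c - r : ℝ) : EReal) ≤ a - r := by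
  obtain ⟨c, -, hc⟩ := EReal.lt_iff_exists_real_btwn.1 ha
  exact ⟨c, fun r => by rw [EReal.coe_sub]; exact EReal.sub_le_sub hc.le le_rfl⟩

theorem EReal.bot_lt_sub_coe {a : EReal} (ha : ⊥ < a) (r : ℝ) : ⊥ < a - r := by
  obtain ⟨c, hc⟩ := EReal.exists_coe_sub_le_sub ha
  exact (EReal.bot_lt_coe _).trans_le (hc r)

section Minimizer

variable {α β : Type*}

/-- An arbitrary point when `f` has no minimiser on `s`. -/
noncomputable def minimizerOn [Nonempty α] [Preorder β] (f : α → β) (s : Set α) : α :=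
  Classical.epsilon fun a => a ∈ s ∧ IsMinOn f s a

theorem minimizerOn_spec [Nonempty α] [Preorder β] {f : α → β} {s : Set α}
    (h : ∃ a ∈ s, IsMinOn f s a) : minimizerOn f s ∈ s ∧ IsMinOn f s (minimizerOn f s) :=
  Classical.epsilon_spec h

theorem minimizerOn_singleton [Nonempty α] [Preorder β] (f : α → β) (a : α) :
    minimizerOn f {a} = a :=
  (minimizerOn_spec (f := f) (s := {a})
    ⟨a, mem_singleton a, isMinOn_iff.2 fun _ hx => by rw [mem_singleton_iff.1 hx]⟩).1

theorem LowerSemicontinuous.exists_isMinOn_univ_of_isBounded [PseudoMetricSpace α] [ProperSpace α]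
    [LinearOrder β] {f : α → β} (hf : LowerSemicontinuous f) (a : α)
    (hbdd : Bornology.IsBounded {x | f x ≤ f a}) : ∃ x, IsMinOn f univ x := by
  obtain ⟨x, hxa, hx⟩ := (hf.lowerSemicontinuousOn _).exists_isMinOn ⟨a, le_refl (f a)⟩
    (Metric.isCompact_of_isClosed_isBounded (hf.isClosed_preimage (f a)) hbdd)
  refine ⟨x, isMinOn_iff.2 fun y _ => ?_⟩
  by_cases hy : f y ≤ f a
  · exact isMinOn_iff.1 hx y hy
  · exact (hxa : f x ≤ f a).trans (le_of_not_ge hy)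

theorem LowerSemicontinuous.exists_isMinOn_univ_of_affine_le {f : ℝ → EReal}
    (hf : LowerSemicontinuous f) {a b p q : ℝ} (hp : 0 < p) (hq : q < 0)
    (ha : ∀ u, ((a - u * p : ℝ) : EReal) ≤ f u) (hb : ∀ u, ((b - u * q : ℝ) : EReal) ≤ f u) :
    ∃ u, IsMinOn f univ u := by
  by_cases hfin : ∃ u₀, f u₀ ≠ ⊤
  · obtain ⟨u₀, hu₀⟩ := hfin
    obtain ⟨r, hr⟩ : ∃ r : ℝ, f u₀ = r :=
      ⟨_, (EReal.coe_toReal hu₀ ((EReal.bot_lt_coe _).trans_le (ha u₀)).ne').symm⟩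
    refine hf.exists_isMinOn_univ_of_isBounded u₀
      ((Metric.isBounded_Icc ((a - r) / p) ((r - b) / -q)).subset fun u hu => ?_)
    have hua : a - u * p ≤ r := EReal.coe_le_coe_iff.1 ((ha u).trans (hr ▸ hu))
    have hub : b - u * q ≤ r := EReal.coe_le_coe_iff.1 ((hb u).trans (hr ▸ hu))
    exact ⟨(div_le_iff₀ hp).2 (by linarith), (le_div_iff₀ (neg_pos.2 hq)).2 (by linarith)⟩
  · push Not at hfin
    exact ⟨0, isMinOn_iff.2 fun v _ => by rw [hfin 0, hfin v]⟩

end Minimizer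

noncomputable def localCost (U : ℕ → (ℕ → ℝ) → EReal) (C : Set (ℕ → ℝ)) (k : ℕ) (u : ℝ) :
    EReal :=
  ⨆ S' ∈ C, (U (k + 1) S' - ((u * (S' (k + 1) - S' k) : ℝ) : EReal))

section LocalCost

variable (U : ℕ → (ℕ → ℝ) → EReal) (C : Set (ℕ → ℝ)) (k : ℕ)

theorem sub_le_localCost {S' : ℕ → ℝ} (hS' : S' ∈ C) (u : ℝ) :
    U (k + 1) S' - ((u * (S' (k + 1) - S' k) : ℝ) : EReal) ≤ localCost U C k u :=
  le_iSup₂ (f := fun S' (_ : S' ∈ C) => U (k + 1) S' - ((u * (S' (k + 1) - S' k) : ℝ) : EReal))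
    S' hS'

theorem lowerSemicontinuous_localCost : LowerSemicontinuous (localCost U C k) := by
  refine lowerSemicontinuous_biSup fun S' _ => ?_
  induction U (k + 1) S' with
  | bot => simpa only [EReal.bot_sub] using lowerSemicontinuous_const
  | top => simpa only [EReal.top_sub_coe] using lowerSemicontinuous_const
  | coe a =>
    simp_rw [← EReal.coe_sub]
    exact (continuous_coe_real_ereal.comp (by fun_prop)).lowerSemicontinuous

end LocalCost

namespace Market

variable (M : Market) {n : ℕ} {S : ℕ → ℝ} {k : ℕ}

theorem bddAbove_N (hn : M.NBounded n) (hS : S ∈ M.T) :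
    BddAbove ((fun H : Portfolio => H.N S) '' M.P) :=
  ⟨n, by rintro _ ⟨H, hH, rfl⟩; exact hn H hH S hS⟩

theorem le_Mx (hn : M.NBounded n) {H : Portfolio} (hH : H ∈ M.P) (hS : S ∈ M.T) :
    H.N S ≤ M.Mx S :=
  le_csSup (M.bddAbove_N hn hS) ⟨H, hH, rfl⟩

theorem Mx_le (hn : M.NBounded n) (hS : S ∈ M.T) : M.Mx S ≤ n :=
  csSup_le ⟨_, _, M.zero_mem, rfl⟩ (by rintro _ ⟨H, hH, rfl⟩; exact hn H hH S hS)

theorem zero_mem_Iset : (0 : ℝ) ∈ M.Iset k S :=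
  ⟨_, M.zero_mem, rfl⟩

theorem Iset_eq_singleton_zero (hn : M.NBounded n) (hS : S ∈ M.T) (hk : M.Mx S ≤ k) :
    M.Iset k S = {0} := by
  refine eq_singleton_iff_unique_mem.2 ⟨M.zero_mem_Iset, ?_⟩
  rintro _ ⟨H, hH, rfl⟩
  exact M.liquidate H hH S hS k ((M.le_Mx hn hH hS).trans hk)

theorem self_mem_cond (hS : S ∈ M.T) : S ∈ M.cond S k :=
  ⟨hS, fun _ _ => rfl⟩

theorem cond_congr {S' : ℕ → ℝ} (hag : ∀ l ≤ k, S l = S' l) : M.cond S k = M.cond S' k := by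
  ext x
  exact and_congr_right fun _ => forall₂_congr fun l hl => by rw [hag l hl]

theorem Iset_congr {S' : ℕ → ℝ} (hS : S ∈ M.T) (hS' : S' ∈ M.T) (hag : ∀ l ≤ k, S l = S' l) :
    M.Iset k S = M.Iset k S' := by
  ext u
  exact exists_congr fun H => and_congr_right fun hH => by
    rw [M.nonanticipative H hH k S hS S' hS' hag]

theorem biSup_cond_eq_localCost (U : ℕ → (ℕ → ℝ) → EReal) (u : ℝ) :
    (⨆ S' ∈ M.cond S k, (U (k + 1) S' - ((u * (S' (k + 1) - S k) : ℝ) : EReal)))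
      = localCost U (M.cond S k) k u :=
  biSup_congr fun _ hS' => by rw [hS'.2 k le_rfl]

theorem UpDownNode.exists_up {M : Market} (h : M.UpDownNode S k) :
    ∃ Sp ∈ M.cond S k, 0 < Sp (k + 1) - S k := by
  simpa only [lt_iSup_iff, EReal.coe_pos, exists_prop] using h.1

theorem UpDownNode.exists_down {M : Market} (h : M.UpDownNode S k) :
    ∃ Sm ∈ M.cond S k, Sm (k + 1) - S k < 0 := by
  simpa only [iInf_lt_iff, EReal.coe_neg', exists_prop] using h.2

theorem exists_isMinOn_localCost_of_upDown (U : ℕ → (ℕ → ℝ) → EReal)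
    (hbot : ∀ S' ∈ M.cond S k, ⊥ < U (k + 1) S') (hud : M.UpDownNode S k) :
    ∃ u, IsMinOn (localCost U (M.cond S k) k) univ u := by
  obtain ⟨Sp, hSp, hp⟩ := hud.exists_up
  obtain ⟨Sm, hSm, hm⟩ := hud.exists_down
  obtain ⟨a, ha⟩ := EReal.exists_coe_sub_le_sub (hbot Sp hSp)
  obtain ⟨b, hb⟩ := EReal.exists_coe_sub_le_sub (hbot Sm hSm)
  refine (lowerSemicontinuous_localCost U _ k).exists_isMinOn_univ_of_affine_le hp hm
    (fun u => (ha _).trans ?_) (fun u => (hb _).trans ?_)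
  · simpa only [hSp.2 k le_rfl] using sub_le_localCost U _ k hSp u
  · simpa only [hSm.2 k le_rfl] using sub_le_localCost U _ k hSm u

def CompactOrUpDownNode (S : ℕ → ℝ) (k : ℕ) : Prop :=
  IsCompact (M.Iset k S) ∨ (M.UpDownNode S k ∧ M.Iset k S = univ)

variable {Z : (ℕ → ℝ) → ℝ} {U : ℕ → (ℕ → ℝ) → EReal}

theorem exists_isMinOn_localCost (hbot : ∀ S' ∈ M.cond S k, ⊥ < U (k + 1) S')
    (hnode : M.CompactOrUpDownNode S k) :
    ∃ u ∈ M.Iset k S, IsMinOn (localCost U (M.cond S k) k) (M.Iset k S) u := by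
  rcases hnode with hcpt | ⟨hud, hI⟩
  · exact ((lowerSemicontinuous_localCost U _ k).lowerSemicontinuousOn _).exists_isMinOn
      ⟨0, M.zero_mem_Iset⟩ hcpt
  · obtain ⟨u, hu⟩ := M.exists_isMinOn_localCost_of_upDown U hbot hud
    exact ⟨u, hI ▸ mem_univ u, hI ▸ hu⟩

variable {M} in
theorem IsDynU.eq_iInf_localCost (hU : M.IsDynU Z U) (hS : S ∈ M.T) (hk : k < M.Mx S) :
    U k S = ⨅ H ∈ M.P, localCost U (M.cond S k) k (H.pos k S) := by
  simp only [(hU S hS).2.2 k hk, biSup_cond_eq_localCost]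

variable {M} in
theorem IsDynU.eq_localCost_of_isMinOn (hU : M.IsDynU Z U) (hS : S ∈ M.T) (hk : k < M.Mx S)
    {u : ℝ} (hu : u ∈ M.Iset k S)
    (hmin : IsMinOn (localCost U (M.cond S k) k) (M.Iset k S) u) :
    U k S = localCost U (M.cond S k) k u := by
  obtain ⟨H₀, hH₀, rfl⟩ := hu
  rw [hU.eq_iInf_localCost hS hk]
  exact le_antisymm (iInf₂_le H₀ hH₀) (le_iInf₂ fun H hH => isMinOn_iff.1 hmin _ ⟨H, hH, rfl⟩)

variable {M} in
theorem IsDynU.bot_lt (hU : M.IsDynU Z U) (hn : M.NBounded n)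
    (hcase : ∀ S ∈ M.T, ∀ k < M.Mx S, M.CompactOrUpDownNode S k) :
    ∀ k, ∀ S ∈ M.T, ⊥ < U k S := by
  refine Nat.forall_of_downward_induction (n := n) (fun k hk S hS => ?_) (fun k _ ih S hS => ?_)
  · rw [(hU S hS).1 k ((M.Mx_le hn hS).trans_lt hk)]
    exact EReal.bot_lt_zero
  rcases lt_trichotomy k (M.Mx S) with hlt | rfl | hgt
  · obtain ⟨u, hu, hmin⟩ :=
      M.exists_isMinOn_localCost (fun S' hS' => ih S' hS'.1) (hcase S hS k hlt)
    rw [hU.eq_localCost_of_isMinOn hS hlt hu hmin]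
    exact (EReal.bot_lt_sub_coe (ih S hS) _).trans_le
      (sub_le_localCost U _ k (M.self_mem_cond hS) u)
  · rw [(hU S hS).2.1]
    exact EReal.bot_lt_coe _
  · rw [(hU S hS).1 k hgt]
    exact EReal.bot_lt_zero

def insertPortfolio (H : Portfolio)
    (hna : ∀ i, ∀ S ∈ M.T, ∀ S' ∈ M.T, (∀ l ≤ i, S l = S' l) → H.pos i S = H.pos i S')
    (hliq : ∀ S ∈ M.T, ∀ k, H.N S ≤ k → H.pos k S = 0) : Market where
  s0 := M.s0
  T := M.T
  P := insert H M.P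
  start := M.start
  nonanticipative := by
    rintro H' (rfl | hH')
    exacts [hna, M.nonanticipative H' hH']
  liquidate := by
    rintro H' (rfl | hH')
    exacts [hliq, M.liquidate H' hH']
  zero_mem := mem_insert_of_mem _ M.zero_mem

section InsertPortfolio

variable {H : Portfolio}
  {hna : ∀ i, ∀ S ∈ M.T, ∀ S' ∈ M.T, (∀ l ≤ i, S l = S' l) → H.pos i S = H.pos i S'}
  {hliq : ∀ S ∈ M.T, ∀ k, H.N S ≤ k → H.pos k S = 0}

theorem Mx_insertPortfolio (hn : M.NBounded n) (hHN : H.N S ≤ M.Mx S) (hS : S ∈ M.T) :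
    (M.insertPortfolio H hna hliq).Mx S = M.Mx S := by
  change sSup ((fun H : Portfolio => H.N S) '' insert H M.P) = M.Mx S
  rw [image_insert_eq, csSup_insert (M.bddAbove_N hn hS) ⟨_, _, M.zero_mem, rfl⟩]
  exact sup_eq_right.2 hHN

variable {M} in
theorem IsDynU.insertPortfolio_eq (hU : M.IsDynU Z U) (hn : M.NBounded n)
    (hHN : ∀ S ∈ M.T, H.N S ≤ M.Mx S)
    (hH : ∀ S ∈ M.T, ∀ k < M.Mx S, U k S ≤ localCost U (M.cond S k) k (H.pos k S))
    {U' : ℕ → (ℕ → ℝ) → EReal} (hU' : (M.insertPortfolio H hna hliq).IsDynU Z U') :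
    ∀ k, ∀ S ∈ M.T, U' k S = U k S := by
  have hMx : ∀ S ∈ M.T, (M.insertPortfolio H hna hliq).Mx S = M.Mx S :=
    fun S hS => M.Mx_insertPortfolio hn (hHN S hS) hS
  refine Nat.forall_of_downward_induction (n := n) (fun k hk S hS => ?_) (fun k _ ih S hS => ?_)
  · have hgt := (M.Mx_le hn hS).trans_lt hk
    rw [(hU' S hS).1 k ((hMx S hS).symm ▸ hgt), (hU S hS).1 k hgt]
  rcases lt_trichotomy k (M.Mx S) with hlt | rfl | hgt
  · have hcost : ∀ H' : Portfolio,
        (⨆ S' ∈ M.cond S k, (U' (k + 1) S' - ((H'.pos k S * (S' (k + 1) - S k) : ℝ) : EReal)))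
          = localCost U (M.cond S k) k (H'.pos k S) := fun H' =>
      (biSup_congr fun S' hS' => by rw [ih S' hS'.1]).trans (M.biSup_cond_eq_localCost U _)
    rw [(hU' S hS).2.2 k ((hMx S hS).symm ▸ hlt)]
    change ⨅ H' ∈ insert H M.P, ⨆ S' ∈ M.cond S k, _ = _
    rw [iInf_congr fun H' => iInf_congr fun _ => hcost H', iInf_insert,
      ← hU.eq_iInf_localCost hS hlt]
    exact inf_eq_right.2 (hH S hS _ hlt)
  · have hfinal := (hU' S hS).2.1
    rw [hMx S hS] at hfinal
    rw [hfinal, (hU S hS).2.1]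
  · rw [(hU' S hS).1 k ((hMx S hS).symm ▸ hgt), (hU S hS).1 k hgt]

end InsertPortfolio

/-- Past `M(S)` the only position on offer is `0`, so the minimiser there is `0` and the
portfolio liquidates at `M(S)` without testing `k < M(S)`. -/
noncomputable def completingPortfolio (U : ℕ → (ℕ → ℝ) → EReal) : Portfolio where
  pos k S := minimizerOn (localCost U (M.cond S k) k) (M.Iset k S)
  N := M.Mx

theorem completingPortfolio_nonanticipative (U : ℕ → (ℕ → ℝ) → EReal) (i : ℕ) {S' : ℕ → ℝ}
    (hS : S ∈ M.T) (hS' : S' ∈ M.T) (hag : ∀ l ≤ i, S l = S' l) :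
    (M.completingPortfolio U).pos i S = (M.completingPortfolio U).pos i S' := by
  simp only [completingPortfolio, M.cond_congr hag, M.Iset_congr hS hS' hag]

theorem completingPortfolio_liquidate (U : ℕ → (ℕ → ℝ) → EReal) (hn : M.NBounded n)
    (hS : S ∈ M.T) (hk : M.Mx S ≤ k) : (M.completingPortfolio U).pos k S = 0 := by
  simp only [completingPortfolio, M.Iset_eq_singleton_zero hn hS hk, minimizerOn_singleton]

variable {M} in
theorem IsDynU.eq_localCost_completingPortfolio (hU : M.IsDynU Z U) (hn : M.NBounded n)
    (hcase : ∀ S ∈ M.T, ∀ k < M.Mx S, M.CompactOrUpDownNode S k) (hS : S ∈ M.T)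
    (hk : k < M.Mx S) :
    U k S = localCost U (M.cond S k) k ((M.completingPortfolio U).pos k S) :=
  have hmin := minimizerOn_spec <| M.exists_isMinOn_localCost
    (fun S' hS' => hU.bot_lt hn hcase (k + 1) S' hS'.1) (hcase S hS k hk)
  hU.eq_localCost_of_isMinOn hS hk hmin.1 hmin.2

end Market

theorem u_completion_theorem_general (n : ℕ) (M : Market) (hn : M.NBounded n)
    (Z : (ℕ → ℝ) → ℝ) (U : ℕ → (ℕ → ℝ) → EReal) (hU : M.IsDynU Z U)
    (hcase : ∀ S ∈ M.T, ∀ k : ℕ, k < M.Mx S →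
      IsCompact (M.Iset k S) ∨ (M.UpDownNode S k ∧ M.Iset k S = Set.univ)) :
    ∃ Hstar : Portfolio,
      (∀ i : ℕ, ∀ S ∈ M.T, ∀ S' ∈ M.T, (∀ l ≤ i, S l = S' l) →
        Hstar.pos i S = Hstar.pos i S') ∧
      (∀ S ∈ M.T, Hstar.N S = M.Mx S) ∧
      ∃ Mstar : Market, Mstar.s0 = M.s0 ∧ Mstar.T = M.T ∧ Mstar.P = insert Hstar M.P ∧
        ∀ Ustar : ℕ → (ℕ → ℝ) → EReal, Mstar.IsDynU Z Ustar →
          (∀ S ∈ M.T, ∀ i : ℕ, i ≤ n → Ustar i S = U i S) ∧ Mstar.UComplete Z Ustar := by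
  set Hstar := M.completingPortfolio U
  have hna : ∀ i, ∀ S ∈ M.T, ∀ S' ∈ M.T, (∀ l ≤ i, S l = S' l) → Hstar.pos i S = Hstar.pos i S' :=
    fun i _ hS _ hS' hag => M.completingPortfolio_nonanticipative U i hS hS' hag
  have hliq : ∀ S ∈ M.T, ∀ k, Hstar.N S ≤ k → Hstar.pos k S = 0 :=
    fun _ hS _ hk => M.completingPortfolio_liquidate U hn hS hk
  have hopt : ∀ S ∈ M.T, ∀ k < M.Mx S, U k S = localCost U (M.cond S k) k (Hstar.pos k S) :=
    fun _ hS _ hk => hU.eq_localCost_completingPortfolio hn hcase hS hk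
  refine ⟨Hstar, hna, fun _ _ => rfl, M.insertPortfolio Hstar hna hliq, rfl, rfl, rfl,
    fun Ustar hUstar => ?_⟩
  have heq := hU.insertPortfolio_eq hn (fun _ _ => le_rfl)
    (fun S hS k hk => (hopt S hS k hk).le) hUstar
  refine ⟨fun S hS i _ => heq i S hS, fun S hS k _ hk => ⟨Hstar, mem_insert _ _, ?_⟩⟩
  rw [M.Mx_insertPortfolio hn le_rfl hS] at hk
  rw [heq k S hS, hopt S hS k hk, ← M.biSup_cond_eq_localCost]
  exact biSup_congr fun S' hS' => by rw [heq (k + 1) S' hS'.1]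

/-- u-completion of a market. Under the stated hypotheses there is a
non-anticipative portfolio `H*` with `N_{H*} = M` such that the enlarged market
`ℳ* = 𝒮 × (ℋ ∪ {H*})` is u-complete with respect to `Z` and has the same dynamic
bounds as `ℳ`. -/
theorem u_completion_theorem (n : ℕ) (M : Market) (hn : M.NBounded n)
    (hstop : ∀ H ∈ M.P, StoppingTime M.T H.N)
    (Z : (ℕ → ℝ) → ℝ) (U : ℕ → (ℕ → ℝ) → EReal) (hU : M.IsDynU Z U)
    (hcase : ∀ S ∈ M.T, ∀ k : ℕ, k < M.Mx S →
      IsCompact (M.Iset k S) ∨ (M.UpDownNode S k ∧ M.Iset k S = Set.univ))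
    (hfin : ∀ S ∈ M.T, ∀ k : ℕ, k < M.Mx S → ∀ S' ∈ M.cond S k, U (k + 1) S' < ⊤) :
    ∃ Hstar : Portfolio,
      (∀ i : ℕ, ∀ S ∈ M.T, ∀ S' ∈ M.T, (∀ l ≤ i, S l = S' l) →
        Hstar.pos i S = Hstar.pos i S') ∧
      (∀ S ∈ M.T, Hstar.N S = M.Mx S) ∧
      ∃ Mstar : Market, Mstar.s0 = M.s0 ∧ Mstar.T = M.T ∧ Mstar.P = insert Hstar M.P ∧
        ∀ Ustar : ℕ → (ℕ → ℝ) → EReal, Mstar.IsDynU Z Ustar →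
          (∀ S ∈ M.T, ∀ i : ℕ, i ≤ n → Ustar i S = U i S) ∧ Mstar.UComplete Z Ustar :=
  u_completion_theorem_general n M hn Z U hU hcase
end

section
/- Let ℳ = 𝒮 × ℋ be an n-bounded discrete market, Z a function on 𝒮, and (S, i) a node with 0 ≤ i < M(S) at which both 𝒮⁻_(S,i) and 𝒮⁺_(S,i) are nonempty. Then the convex-hull quantity satisfies L_i(S, Z, ℳ) ≤ Ū_i(S, Z, ℳ). -/
open scoped BigOperators

/-
The chord of the graph of `Ū_{i+1}` over `S⁻_{i+1} ≤ S_i < S⁺_{i+1}`, read off at `S_i`, is a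
convex combination of the two hedging errors `Ū_{i+1}(S^±) - u (S^±_{i+1} - S_i)`, whatever the
position `u`. Hence it never exceeds the worst-case error of any `u`, and so not their infimum
`Ū_i(S)` either.
-/

theorem chord_le_max_sub_mul {a b s y₁ y₂ : ℝ} (hb : b ≤ s) (ha : s < a) (u : ℝ) :
    y₁ - (y₁ - y₂) / (a - b) * (a - s) ≤ max (y₁ - u * (a - s)) (y₂ - u * (b - s)) := by
  have hab : 0 < a - b := by linarith
  set l := (s - b) / (a - b) with hl
  have hl0 : 0 ≤ l := div_nonneg (by linarith) hab.le
  have hl1 : l ≤ 1 := by rw [hl, div_le_one hab]; linarith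
  calc _ = l * (y₁ - u * (a - s)) + (1 - l) * (y₂ - u * (b - s)) := by
        rw [hl]; field_simp; ring
    _ ≤ l * max (y₁ - u * (a - s)) (y₂ - u * (b - s))
        + (1 - l) * max (y₁ - u * (a - s)) (y₂ - u * (b - s)) :=
      add_le_add (mul_le_mul_of_nonneg_left (le_max_left _ _) hl0)
        (mul_le_mul_of_nonneg_left (le_max_right _ _) (sub_nonneg.2 hl1))
    _ = max (y₁ - u * (a - s)) (y₂ - u * (b - s)) := by ring

namespace Market

theorem chord_le_iSup_cond (M : Market) (U : ℕ → (ℕ → ℝ) → ℝ) {S Sp Sm : ℕ → ℝ} {i : ℕ}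
    (hSp : Sp ∈ M.Splus S i) (hSm : Sm ∈ M.Sminus S i) (u : ℝ) :
    ((U (i + 1) Sp - chSlope U i Sp Sm * (Sp (i + 1) - S i) : ℝ) : EReal) ≤
      ⨆ S' ∈ M.cond S i, ((U (i + 1) S' - u * (S' (i + 1) - S i) : ℝ) : EReal) := by
  refine (EReal.coe_le_coe_iff.2 (chord_le_max_sub_mul hSm.2 hSp.2 u)).trans ?_
  rw [EReal.coe_strictMono.monotone.map_max]
  exact max_le (le_iSup₂_of_le Sp hSp.1 le_rfl) (le_iSup₂_of_le Sm hSm.1 le_rfl)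

end Market

theorem convex_hull_le_general (M : Market)
    (Z : (ℕ → ℝ) → ℝ) (U : ℕ → (ℕ → ℝ) → ℝ) (hU : M.IsDynUR Z U)
    (S : ℕ → ℝ) (hS : S ∈ M.T) (i : ℕ) (hi : i < M.Mx S) :
    M.Lval U S i ≤ ((U i S : ℝ) : EReal) := by
  rw [(hU S hS).2.2 i hi]
  exact iSup₂_le fun Sp hSp => iSup₂_le fun Sm hSm =>
    le_iInf₂ fun u _ => M.chord_le_iSup_cond U hSp hSm u

/-- the convex-hull quantity is dominated by the dynamic bound:
`L_i(S, Z, ℳ) ≤ Ū_i(S, Z, ℳ)`. -/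
theorem convex_hull_le (n : ℕ) (M : Market) (hn : M.NBounded n)
    (Z : (ℕ → ℝ) → ℝ) (U : ℕ → (ℕ → ℝ) → ℝ) (hU : M.IsDynUR Z U)
    (S : ℕ → ℝ) (hS : S ∈ M.T) (i : ℕ) (hi : i < M.Mx S)
    (hminus : (M.Sminus S i).Nonempty) (hplus : (M.Splus S i).Nonempty) :
    M.Lval U S i ≤ ((U i S : ℝ) : EReal) :=
  convex_hull_le_general M Z U hU S hS i hi
end

section
/- Let ℳ = 𝒮 × ℋ be a discrete market, Z an upper minmax function with data (ν_i)_{i=1}^m, (a_i)_{i=1}^m, b, and suppose the portfolio 0^(A) (the portfolio whose i-th coordinate is A_i(S) for 0 ≤ i < ν_m(S) and 0 for i ≥ ν_m(S)) belongs to ℋ. Then for any fixed S* ∈ 𝒮 and integer k ≥ 0, V̄_k(S*, Z, ℳ) ≤ A₀ s₀ + B, where B = Σ_{l=0}^{k−1} A_l(S*) Δ_l S* + b. -/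
open scoped BigOperators

/-!
Hedge with the portfolio `0^(A)`. Since `A_l(S) = ∑ {a_j : l < ν_j(S)}`, its gains telescope:
`∑_{l < n} A_l(S) Δ_l S = ∑_j a_j (S_{min(ν_j(S), n)} - s₀)`, so over `[k, ν_m)` they equal
`∑_j a_j S_{ν_j} - A₀ s₀` minus the gains before `k`, and `Z ≤ ∑_j a_j S_{ν_j} + b` gives the bound
path by path. The gains before `k` are the same for every path through `(S*, k)` because the
`ν_j` are stopping times: whether `l < ν_j` holds for `l ≤ k` is decided by the path up to `k`.
-/

open Finset

theorem StoppingTime.lt_iff_of_agree {T : Set (ℕ → ℝ)} {ν : (ℕ → ℝ) → ℕ}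
    (hν : StoppingTime T ν) {S S' : ℕ → ℝ} (hS : S ∈ T) (hS' : S' ∈ T) {k l : ℕ}
    (hagree : ∀ i ≤ k, S' i = S i) (hl : l ≤ k) : l < ν S' ↔ l < ν S := by
  rcases le_or_gt (ν S) k with hνS | hνS
  · rw [hν S hS S' hS' fun i hi => hagree i (hi.trans hνS)]
  rcases le_or_gt (ν S') k with hνS' | hνS'
  · have := hν S' hS' S hS fun i hi => (hagree i (hi.trans hνS')).symm
    omega
  · omega

section StoppedWeight

variable {ι : Type*} [Fintype ι] (ν : ι → (ℕ → ℝ) → ℕ) (a : ι → ℝ)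

/-- The position `A_l(S)` of the portfolio `0^(A)`. -/
def stoppedWeight (l : ℕ) (S : ℕ → ℝ) : ℝ :=
  ∑ j ∈ univ.filter (fun j => l < ν j S), a j

theorem sum_range_stoppedWeight_mul_sub (S : ℕ → ℝ) (n : ℕ) :
    ∑ i ∈ range n, stoppedWeight ν a i S * (S (i + 1) - S i) =
      ∑ j, a j * (S (min (ν j S) n) - S 0) := by
  calc ∑ i ∈ range n, stoppedWeight ν a i S * (S (i + 1) - S i)
      = ∑ j, ∑ i ∈ range n, if i < ν j S then a j * (S (i + 1) - S i) else 0 := by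
        rw [sum_comm]
        refine sum_congr rfl fun i _ => ?_
        rw [stoppedWeight, sum_mul, sum_filter]
    _ = ∑ j, a j * (S (min (ν j S) n) - S 0) := by
        refine sum_congr rfl fun j _ => ?_
        have hstopped : (range n).filter (· < ν j S) = range (min (ν j S) n) := by
          ext i
          simp only [mem_filter, mem_range, lt_min_iff, and_comm]
        rw [← sum_filter, hstopped, ← mul_sum, sum_range_sub (fun i => S i)]

theorem sum_Ico_stoppedWeight_mul_sub (S : ℕ → ℝ) (k : ℕ) {N : ℕ} (hN : ∀ j, ν j S ≤ N) :
    ∑ i ∈ Ico k N, stoppedWeight ν a i S * (S (i + 1) - S i) =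
      ∑ j, a j * S (ν j S) - (∑ j, a j) * S 0 -
        ∑ i ∈ range k, stoppedWeight ν a i S * (S (i + 1) - S i) := by
  have hfinal : ∀ n, N ≤ n → ∑ i ∈ range n, stoppedWeight ν a i S * (S (i + 1) - S i) =
      ∑ j, a j * S (ν j S) - (∑ j, a j) * S 0 := by
    intro n hn
    rw [sum_range_stoppedWeight_mul_sub, sum_mul, ← sum_sub_distrib]
    exact sum_congr rfl fun j _ => by rw [min_eq_left ((hN j).trans hn)]; ring
  rcases le_or_gt k N with hkN | hNk
  · rw [sum_Ico_eq_sub _ hkN, hfinal N le_rfl]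
  · rw [Ico_eq_empty_of_le hNk.le, sum_empty, hfinal k hNk.le, sub_self]

variable {ν} in
theorem sum_range_stoppedWeight_eq_of_agree {T : Set (ℕ → ℝ)}
    (hν : ∀ j, StoppingTime T (ν j)) {S S' : ℕ → ℝ} (hS : S ∈ T) (hS' : S' ∈ T) {k : ℕ}
    (hagree : ∀ i ≤ k, S' i = S i) :
    ∑ l ∈ range k, stoppedWeight ν a l S' * (S' (l + 1) - S' l) =
      ∑ l ∈ range k, stoppedWeight ν a l S * (S (l + 1) - S l) := by
  refine sum_congr rfl fun l hl => ?_
  have hlk : l < k := mem_range.mp hl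
  have hweight : stoppedWeight ν a l S' = stoppedWeight ν a l S :=
    sum_congr (filter_congr fun j _ => (hν j).lt_iff_of_agree hS hS' hagree hlk.le) fun _ _ => rfl
  rw [hweight, hagree (l + 1) hlk, hagree l hlk.le]

end StoppedWeight

theorem Market.Vbar_le_of_forall_le {M : Market} {H : Portfolio} (hH : H ∈ M.P) {k : ℕ}
    {S : ℕ → ℝ} {Z : (ℕ → ℝ) → ℝ} {c : ℝ}
    (h : ∀ S' ∈ M.cond S k, Z S' - ∑ i ∈ Ico k (H.N S'), H.pos i S' * (S' (i + 1) - S' i) ≤ c) :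
    M.Vbar k S Z ≤ c :=
  (iInf₂_le H hH).trans <| iSup₂_le fun S' hS' => EReal.coe_le_coe_iff.mpr (h S' hS')

/-- if `Z` is an upper minmax function with data `(ν_j)`, `(a_j)`, `b`, and the
portfolio `0^(A)` belongs to `ℋ`, then `V̄_k(S*, Z, ℳ) ≤ A₀ s₀ + B`. -/
theorem upper_minmax_bound (M : Market) (m : ℕ)
    (ν : Fin (m + 1) → (ℕ → ℝ) → ℕ) (a : Fin (m + 1) → ℝ) (b : ℝ)
    (hstop : ∀ j, StoppingTime M.T (ν j))
    (hmono : ∀ S ∈ M.T, StrictMono (fun j => ν j S))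
    (Z : (ℕ → ℝ) → ℝ)
    (hZ : ∀ S ∈ M.T, Z S ≤ ∑ j, a j * S (ν j S) + b)
    (A : ℕ → (ℕ → ℝ) → ℝ)
    (hA : ∀ (l : ℕ) (S : ℕ → ℝ),
      A l S = ∑ j ∈ Finset.univ.filter (fun j : Fin (m + 1) => l < ν j S), a j)
    (hH0 : ∃ H0 ∈ M.P, (∀ i : ℕ, ∀ S ∈ M.T, H0.pos i S = A i S) ∧
      ∀ S ∈ M.T, H0.N S = ν (Fin.last m) S)
    (Sstar : ℕ → ℝ) (hSstar : Sstar ∈ M.T) (k : ℕ) :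
    M.Vbar k Sstar Z ≤
      (((∑ j, a j) * M.s0 +
        (∑ l ∈ Finset.range k, A l Sstar * (Sstar (l + 1) - Sstar l) + b) : ℝ) : EReal) := by
  obtain rfl : A = stoppedWeight ν a := funext fun l => funext fun S => hA l S
  obtain ⟨H0, hH0P, hpos, hN⟩ := hH0
  refine M.Vbar_le_of_forall_le hH0P fun S ⟨hS, hagree⟩ => ?_
  have hlast : ∀ j, ν j S ≤ ν (Fin.last m) S := fun j => (hmono S hS).monotone (Fin.le_last j)
  rw [sum_congr rfl fun i _ => by rw [hpos i S hS], hN S hS,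
    sum_Ico_stoppedWeight_mul_sub ν a S k hlast,
    sum_range_stoppedWeight_eq_of_agree a hstop hSstar hS hagree, M.start S hS]
  linarith [hZ S hS]
end
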